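/- Let V and W be varieties of Ω-algebras of the same type without nullary operation symbols, and let Σ be an equational base of V. If the Mal'tsev product V ∘ W is a variety, then Σ^p is an equational base for V ∘ W. -/

import Mathlib

structure Signature where
  symbols : Type
  arity : symbols → ℕ

structure Alg (S : Signature) where
  carrier : Type
  op : ∀ ω : S.symbols, (Fin (S.arity ω) → carrier) → carrier
  nonempty : Nonempty carrier

inductive Term (S : Signature) (X : Type) : Type
  | var : X → Term S X
  | app : ∀ ω : S.symbols, (Fin (S.arity ω) → Term S X) → Term S X

def Term.eval {S : Signature} {X : Type} (A : Alg S) (env : X → A.carrier) :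
    Term S X → A.carrier
  | .var x => env x
  | .app ω ts => A.op ω fun i => (ts i).eval A env

/-- The algebra `A` satisfies the identity `u = v`. -/
def Alg.sat {S : Signature} (A : Alg S) {X : Type} (u v : Term S X) : Prop :=
  ∀ env : X → A.carrier, u.eval A env = v.eval A env

/-- An identity: a pair of terms in the countably many variables `x₀, x₁, …`. -/
abbrev Ident (S : Signature) := Term S ℕ × Term S ℕ

/-- `A` lies in the variety axiomatized by the set of identities `E`. -/
def Alg.Models {S : Signature} (A : Alg S) (E : Set (Ident S)) : Prop :=
  ∀ e ∈ E, A.sat e.1 e.2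

/-- The identity `u = v` holds in the variety axiomatized by `E`. -/
def Conseq {S : Signature} (E : Set (Ident S)) {X : Type} (u v : Term S X) : Prop :=
  ∀ A : Alg S, A.Models E → A.sat u v

/-- `a` is an idempotent element of `A`. -/
def Alg.IsIdem {S : Signature} (A : Alg S) (a : A.carrier) : Prop :=
  ∀ ω : S.symbols, A.op ω (fun _ => a) = a

/-- `B` is (the universe of) a subalgebra of `A`. -/
def Alg.IsSubuniverse {S : Signature} (A : Alg S) (B : Set A.carrier) : Prop :=
  ∀ ω (a : Fin (S.arity ω) → A.carrier), (∀ i, a i ∈ B) → A.op ω a ∈ B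

/-- The subalgebra of `A` on a nonempty subuniverse `B`. -/
def Alg.subAlg {S : Signature} (A : Alg S) (B : Set A.carrier)
    (h : A.IsSubuniverse B) (hne : B.Nonempty) : Alg S where
  carrier := B
  op ω a := ⟨A.op ω fun i => (a i : A.carrier), h ω _ fun i => (a i).2⟩
  nonempty := hne.to_subtype

/-- A congruence of `A`: an equivalence relation compatible with all operations. -/
structure Congruence {S : Signature} (A : Alg S) where
  rel : A.carrier → A.carrier → Prop
  iseqv : Equivalence rel
  compat : ∀ ω (a b : Fin (S.arity ω) → A.carrier),
    (∀ i, rel (a i) (b i)) → rel (A.op ω a) (A.op ω b)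

def Congruence.setoid {S : Signature} {A : Alg S} (θ : Congruence A) :
    Setoid A.carrier := ⟨θ.rel, θ.iseqv⟩

/-- The quotient algebra `A/θ`. -/
noncomputable def Alg.quot {S : Signature} (A : Alg S) (θ : Congruence A) : Alg S where
  carrier := Quotient θ.setoid
  op ω q := Quotient.mk θ.setoid (A.op ω fun i => (q i).out)
  nonempty := A.nonempty.map (Quotient.mk θ.setoid)

/-- Membership in the Mal'tsev product of the varieties axiomatized by `V` and `W`:
`A` has a congruence `θ` with `A/θ` in (the variety of) `W` such that every
`θ`-class which is a subalgebra of `A` is an algebra in (the variety of) `V`. -/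
def InMaltsev {S : Signature} (V W : Set (Ident S)) (A : Alg S) : Prop :=
  ∃ θ : Congruence A, (A.quot θ).Models W ∧
    ∀ a : A.carrier, ∀ h : A.IsSubuniverse {b | θ.rel a b},
      (A.subAlg {b | θ.rel a b} h ⟨a, θ.iseqv.refl a⟩).Models V

/-- A class of algebras is a variety iff it is axiomatized by some set of identities. -/
def IsVarietyClass {S : Signature} (K : Alg S → Prop) : Prop :=
  ∃ E : Set (Ident S), ∀ A : Alg S, K A ↔ A.Models E

def Term.subst {S : Signature} {X Y : Type} (f : X → Term S Y) :
    Term S X → Term S Y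
  | .var x => f x
  | .app ω ts => .app ω fun i => (ts i).subst f

/-- The set `σᵖ` of identities obtained from the identity `σ` by substituting for
its variables pairwise `W`-equivalent term idempotents of (the variety of) `W`. -/
def sigmaP {S : Signature} (W : Set (Ident S)) (σ : Ident S) : Set (Ident S) :=
  { e | ∃ r : ℕ → Term S ℕ,
      (∀ i j : ℕ, Conseq W (r i) (r j)) ∧
      (∀ ω : S.symbols, Conseq W (Term.app ω fun _ => r 0) (r 0)) ∧
      e = (σ.1.subst r, σ.2.subst r) }

/-- `Σᵖ = ⋃_{σ ∈ Σ} σᵖ`. -/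
def SigmaP {S : Signature} (W : Set (Ident S)) (Sg : Set (Ident S)) :
    Set (Ident S) :=
  ⋃ σ ∈ Sg, sigmaP W σ

/-!
A member `A` of `V ∘ W`, with congruence `θ`, satisfies `Σᵖ`: the values of pairwise
`W`-equivalent term idempotents `rᵢ` lie in one `θ`-class whose image in `A/θ ⊨ W` is
idempotent, so that class is a subalgebra, lies in `V`, and satisfies every `σ ∈ Σ`.

Conversely, let `θ` be `W`-equivalence of terms on the free algebra `F` of `Σᵖ`; since
every model of `W` satisfies `Σᵖ`, `F/θ ⊨ W`. Representatives of the elements of a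
`θ`-class which is a subalgebra form exactly the tuples of terms allowed in `Σᵖ`, so the
class satisfies `Σ`. Hence `F ∈ V ∘ W`, and as `V ∘ W` is a variety, each of its identities
holds in `F` and thus follows from `Σᵖ`.
-/

variable {S : Signature}

namespace Term

theorem eval_subst {X Y : Type} (A : Alg S) (f : X → Term S Y) (env : Y → A.carrier)
    (t : Term S X) : (t.subst f).eval A env = t.eval A fun x => (f x).eval A env := by
  induction t with
  | var x => rfl
  | app ω ts ih => simp only [Term.subst, Term.eval, ih]

theorem subst_var {X : Type} (t : Term S X) : t.subst Term.var = t := by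
  induction t with
  | var x => rfl
  | app ω ts ih => simp only [Term.subst, ih]

theorem eval_of_forall_eq_idem {X : Type} {A : Alg S} {c : A.carrier} (hc : A.IsIdem c)
    {env : X → A.carrier} (henv : ∀ x, env x = c) (t : Term S X) : t.eval A env = c := by
  induction t with
  | var x => exact henv x
  | app ω ts ih => simp only [Term.eval, ih]; exact hc ω

end Term

namespace Conseq

variable {E : Set (Ident S)} {X : Type} {u v w : Term S X}

theorem refl (E : Set (Ident S)) (t : Term S X) : Conseq E t t := fun _ _ _ => rfl

theorem symm (h : Conseq E u v) : Conseq E v u := fun A hA env => (h A hA env).symm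

theorem trans (h₁ : Conseq E u v) (h₂ : Conseq E v w) : Conseq E u w :=
  fun A hA env => (h₁ A hA env).trans (h₂ A hA env)

theorem of_mem {e : Ident S} (he : e ∈ E) : Conseq E e.1 e.2 := fun _ hA => hA e he

theorem subst {Y : Type} (f : X → Term S Y) (h : Conseq E u v) :
    Conseq E (u.subst f) (v.subst f) := fun A hA env => by
  rw [Term.eval_subst, Term.eval_subst]
  exact h A hA _

theorem app {ω : S.symbols} {a b : Fin (S.arity ω) → Term S X}
    (h : ∀ i, Conseq E (a i) (b i)) : Conseq E (Term.app ω a) (Term.app ω b) :=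
  fun A hA env => congrArg (A.op ω) (funext fun i => h i A hA env)

theorem mono {E' : Set (Ident S)} (hE : ∀ A : Alg S, A.Models E' → A.Models E)
    (h : Conseq E u v) : Conseq E' u v := fun A hA => h A (hE A hA)

end Conseq

theorem Congruence.mk_eq_mk_iff {A : Alg S} (θ : Congruence A) {a b : A.carrier} :
    Quotient.mk θ.setoid a = Quotient.mk θ.setoid b ↔ θ.rel a b :=
  Quotient.eq

theorem Alg.quot_op_mk (A : Alg S) (θ : Congruence A) (ω : S.symbols)
    (d : Fin (S.arity ω) → A.carrier) :
    (A.quot θ).op ω (fun i => Quotient.mk θ.setoid (d i)) = Quotient.mk θ.setoid (A.op ω d) :=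
  Quotient.sound <| θ.compat ω _ _ fun i => Quotient.mk_out (s := θ.setoid) (d i)

theorem Term.eval_quot_mk {X : Type} (A : Alg S) (θ : Congruence A) (c : X → A.carrier)
    (t : Term S X) :
    t.eval (A.quot θ) (fun x => Quotient.mk θ.setoid (c x)) =
      Quotient.mk θ.setoid (t.eval A c) := by
  induction t with
  | var x => rfl
  | app ω ts ih => simp only [Term.eval, ih]; exact A.quot_op_mk θ ω _

theorem Alg.subAlg_sat_iff {X : Type} (A : Alg S) {B : Set A.carrier} (h : A.IsSubuniverse B)
    (hne : B.Nonempty) (u v : Term S X) :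
    (A.subAlg B h hne).sat u v ↔ ∀ c : X → A.carrier, (∀ x, c x ∈ B) →
      u.eval A c = v.eval A c := by
  have val_eval (env : X → B) (t : Term S X) :
      (t.eval (A.subAlg B h hne) env).val = t.eval A fun x => (env x).val := by
    induction t with
    | var x => rfl
    | app ω ts ih => simp only [Term.eval, Alg.subAlg, ← ih]
  constructor
  · intro hsat c hc
    let env (x : X) : B := ⟨c x, hc x⟩
    exact (val_eval env u).symm.trans ((congrArg Subtype.val (hsat env)).trans (val_eval env v))
  · intro hA env
    exact Subtype.ext <|
      (val_eval env u).trans ((hA _ fun x => (env x).2).trans (val_eval env v).symm)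

theorem Congruence.isSubuniverse_class_iff {A : Alg S} (θ : Congruence A) (a : A.carrier) :
    A.IsSubuniverse {b | θ.rel a b} ↔ (A.quot θ).IsIdem (Quotient.mk θ.setoid a) := by
  simp only [Alg.IsIdem, A.quot_op_mk θ _ fun _ => a]
  constructor
  · exact fun h ω => θ.mk_eq_mk_iff.mpr (θ.iseqv.symm (h ω _ fun _ => θ.iseqv.refl a))
  · exact fun h ω d hd =>
      θ.iseqv.trans (θ.iseqv.symm (θ.mk_eq_mk_iff.mp (h ω))) (θ.compat ω _ _ hd)

theorem Alg.Models.sigmaP {W Sg : Set (Ident S)} {A : Alg S} (hA : A.Models W) :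
    A.Models (SigmaP W Sg) := by
  intro e he env
  obtain ⟨σ, -, r, hr, hidem, rfl⟩ := Set.mem_iUnion₂.mp he
  have hc : A.IsIdem ((r 0).eval A env) := fun ω => hidem ω A hA env
  have henv (n : ℕ) : (r n).eval A env = (r 0).eval A env := hr n 0 A hA env
  simp only [Term.eval_subst, Term.eval_of_forall_eq_idem hc henv]

theorem Alg.models_sigmaP_of_inMaltsev {V W Sg : Set (Ident S)}
    (hVSg : ∀ A : Alg S, A.Models V → A.Models Sg) {A : Alg S} (hA : InMaltsev V W A) :
    A.Models (SigmaP W Sg) := by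
  obtain ⟨θ, hW, hV⟩ := hA
  intro e he env
  obtain ⟨σ, hσ, r, hr, hidem, rfl⟩ := Set.mem_iUnion₂.mp he
  let a (n : ℕ) : A.carrier := (r n).eval A env
  have hclass (n : ℕ) : θ.rel (a 0) (a n) := by
    rw [← θ.mk_eq_mk_iff, ← Term.eval_quot_mk, ← Term.eval_quot_mk]
    exact hr 0 n _ hW _
  have hsub : A.IsSubuniverse {b | θ.rel (a 0) b} := by
    rw [θ.isSubuniverse_class_iff, ← Term.eval_quot_mk]
    intro ω
    simpa only [Term.eval] using hidem ω _ hW fun n => Quotient.mk θ.setoid (env n)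
  have hσA := (A.subAlg_sat_iff hsub _ σ.1 σ.2).mp (hVSg _ (hV (a 0) hsub) σ hσ) a hclass
  simp only [Term.eval_subst]
  exact hσA

def termAlg (S : Signature) : Alg S where
  carrier := Term S ℕ
  op := Term.app
  nonempty := ⟨.var 0⟩

theorem Term.eval_termAlg (f : ℕ → Term S ℕ) (t : Term S ℕ) :
    t.eval (termAlg S) f = t.subst f := by
  induction t with
  | var x => rfl
  | app ω ts ih => simp only [Term.eval, Term.subst, ih]; rfl

def Conseq.congruence (E : Set (Ident S)) : Congruence (termAlg S) where
  rel := Conseq E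
  iseqv := ⟨Conseq.refl E, Conseq.symm, Conseq.trans⟩
  compat _ _ _ := Conseq.app

noncomputable def freeAlg (E : Set (Ident S)) : Alg S := (termAlg S).quot (Conseq.congruence E)

namespace freeAlg

variable {E E' : Set (Ident S)}

abbrev mk (E : Set (Ident S)) (t : Term S ℕ) : (freeAlg E).carrier :=
  Quotient.mk (Conseq.congruence E).setoid t

theorem mk_eq_mk_iff {u v : Term S ℕ} : mk E u = mk E v ↔ Conseq E u v :=
  (Conseq.congruence E).mk_eq_mk_iff

theorem conseq_out_mk (t : Term S ℕ) : Conseq E (mk E t).out t :=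
  mk_eq_mk_iff.mp (Quotient.out_eq _)

theorem mk_out (p : (freeAlg E).carrier) : mk E p.out = p := Quotient.out_eq p

theorem op_mk (ω : S.symbols) (t : Fin (S.arity ω) → Term S ℕ) :
    (freeAlg E).op ω (fun i => mk E (t i)) = mk E (Term.app ω t) :=
  (termAlg S).quot_op_mk _ ω t

theorem eval_mk (r : ℕ → Term S ℕ) (t : Term S ℕ) :
    t.eval (freeAlg E) (fun n => mk E (r n)) = mk E (t.subst r) :=
  (Term.eval_quot_mk (termAlg S) _ r t).trans (congrArg (mk E) (Term.eval_termAlg r t))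

noncomputable def coarsening (hE : ∀ A : Alg S, A.Models E → A.Models E') :
    Congruence (freeAlg E') where
  rel p q := Conseq E p.out q.out
  iseqv := ⟨fun _ => Conseq.refl E _, Conseq.symm, Conseq.trans⟩
  compat ω a b h := by
    have hop (c : Fin (S.arity ω) → (freeAlg E').carrier) :
        Conseq E ((freeAlg E').op ω c).out (Term.app ω fun i => (c i).out) :=
      Conseq.mono hE (conseq_out_mk (Term.app ω fun i => (c i).out))
    exact (hop a).trans ((Conseq.app h).trans (hop b).symm)

variable (hE : ∀ A : Alg S, A.Models E → A.Models E')

theorem coarsening_rel_mk_iff {u v : Term S ℕ} :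
    (coarsening hE).rel (mk E' u) (mk E' v) ↔ Conseq E u v := by
  have hout (t : Term S ℕ) : Conseq E (mk E' t).out t := Conseq.mono hE (conseq_out_mk t)
  exact ⟨fun h => (hout u).symm.trans (h.trans (hout v)),
    fun h => (hout u).trans (h.trans (hout v).symm)⟩

theorem quot_coarsening_models : ((freeAlg E').quot (coarsening hE)).Models E := by
  intro e he q
  let t (n : ℕ) : Term S ℕ := (q n).out.out
  have hq : q = fun n => Quotient.mk (coarsening hE).setoid (mk E' (t n)) :=
    funext fun n => by rw [mk_out]; exact (Quotient.out_eq (q n)).symm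
  rw [hq]
  refine (Term.eval_quot_mk _ _ _ e.1).trans (Eq.trans ?_ (Term.eval_quot_mk _ _ _ e.2).symm)
  refine (Congruence.mk_eq_mk_iff _).mpr ?_
  rw [eval_mk, eval_mk, coarsening_rel_mk_iff]
  exact (Conseq.of_mem he).subst t

end freeAlg

theorem freeAlg_sigmaP_inMaltsev {V W Sg : Set (Ident S)}
    (hSgV : ∀ A : Alg S, A.Models Sg → A.Models V) : InMaltsev V W (freeAlg (SigmaP W Sg)) := by
  have hW : ∀ A : Alg S, A.Models W → A.Models (SigmaP W Sg) := fun _ hA => hA.sigmaP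
  let θ := freeAlg.coarsening hW
  refine ⟨θ, freeAlg.quot_coarsening_models hW, fun a hsub => hSgV _ fun σ hσ => ?_⟩
  refine (Alg.subAlg_sat_iff _ hsub _ _ _).mpr fun c hc => ?_
  obtain ⟨r, rfl⟩ : ∃ r : ℕ → Term S ℕ, c = fun n => freeAlg.mk _ (r n) :=
    ⟨fun n => (c n).out, funext fun n => (freeAlg.mk_out (c n)).symm⟩
  have hr (i j : ℕ) : Conseq W (r i) (r j) :=
    (freeAlg.coarsening_rel_mk_iff hW).mp (θ.iseqv.trans (θ.iseqv.symm (hc i)) (hc j))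
  have hidem (ω : S.symbols) : Conseq W (Term.app ω fun _ => r 0) (r 0) := by
    have h := (θ.isSubuniverse_class_iff a).mp hsub ω
    rw [θ.mk_eq_mk_iff.mpr (hc 0), Alg.quot_op_mk, freeAlg.op_mk] at h
    exact (freeAlg.coarsening_rel_mk_iff hW).mp (θ.mk_eq_mk_iff.mp h)
  have hmem : (σ.1.subst r, σ.2.subst r) ∈ SigmaP W Sg :=
    Set.mem_iUnion₂.mpr ⟨σ, hσ, r, hr, hidem, rfl⟩
  rw [freeAlg.eval_mk, freeAlg.eval_mk, freeAlg.mk_eq_mk_iff]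
  exact Conseq.of_mem hmem

theorem Conseq.of_freeAlg_sat {E : Set (Ident S)} {u v : Term S ℕ} (h : (freeAlg E).sat u v) :
    Conseq E u v := by
  have huv := h fun n => freeAlg.mk E (.var n)
  rwa [freeAlg.eval_mk, freeAlg.eval_mk, Term.subst_var, Term.subst_var,
    freeAlg.mk_eq_mk_iff] at huv

theorem stmt_8_general (S : Signature)
    (V W : Set (Ident S)) (Sg : Set (Ident S))
    (hbase : ∀ A : Alg S, A.Models V ↔ A.Models Sg)
    (hvar : IsVarietyClass (InMaltsev V W)) :
    ∀ A : Alg S, InMaltsev V W A ↔ A.Models (SigmaP W Sg) := by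
  intro A
  refine ⟨Alg.models_sigmaP_of_inMaltsev fun B => (hbase B).mp, fun hA => ?_⟩
  obtain ⟨E, hE⟩ := hvar
  have hF : (freeAlg (SigmaP W Sg)).Models E :=
    (hE _).mp (freeAlg_sigmaP_inMaltsev fun B => (hbase B).mpr)
  exact (hE A).mpr fun e he => Conseq.of_freeAlg_sat (hF e he) A hA

/-- If `Σ` is an equational base of the variety `V` and the
Mal'tsev product `V ∘ W` is a variety, then `Σᵖ` is an equational base for
`V ∘ W`. -/
theorem stmt_8 (S : Signature) (h0 : ∀ ω : S.symbols, 0 < S.arity ω)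
    (V W : Set (Ident S)) (Sg : Set (Ident S))
    (hbase : ∀ A : Alg S, A.Models V ↔ A.Models Sg)
    (hvar : IsVarietyClass (InMaltsev V W)) :
    ∀ A : Alg S, InMaltsev V W A ↔ A.Models (SigmaP W Sg) :=
  stmt_8_general S V W Sg hbase hvar
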